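/- Consider the gradient-push algorithm. Then for every w_* ∈ ℝ^d and every t ≥ 0, ‖z(t) − 1_n⊗w̄(t)‖_{π⊗1_d} ≤ δ ‖w(t) − nπ⊗w̄(t)‖_{π⊗1_d} + δ ‖1_n − nπ‖_π σ_W^t (‖w̄(t) − w_*‖ + ‖w_*‖). -/

import Mathlib

open Finset

/-- π-weighted norm on ℝ^n: ‖x‖_π = (Σ_j x_j²/π_j)^{1/2}. -/
noncomputable def wnorm {n : ℕ} (p : Fin n → ℝ) (x : Fin n → ℝ) : ℝ :=
  Real.sqrt (∑ j, x j ^ 2 / p j)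

/-- Matrix operator norm induced by the π-weighted norm. -/
noncomputable def matNorm {n : ℕ} (p : Fin n → ℝ) (A : Matrix (Fin n) (Fin n) ℝ) : ℝ :=
  ⨆ x : {x : Fin n → ℝ // x ≠ 0}, wnorm p (A.mulVec x.1) / wnorm p x.1

/-- Block weighted norm on (ℝ^d)^n: ‖x‖_{π⊗1_d} = (Σ_j ‖x_j‖²/π_j)^{1/2}. -/
noncomputable def bnorm {n d : ℕ} (p : Fin n → ℝ)
    (x : Fin n → EuclideanSpace ℝ (Fin d)) : ℝ :=
  Real.sqrt (∑ j, ‖x j‖ ^ 2 / p j)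

/-- Blockwise action of the Kronecker product A ⊗ I_d on (ℝ^d)^n. -/
noncomputable def kron {n d : ℕ} (A : Matrix (Fin n) (Fin n) ℝ)
    (x : Fin n → EuclideanSpace ℝ (Fin d)) : Fin n → EuclideanSpace ℝ (Fin d) :=
  fun i => ∑ j, A i j • x j

/-- Operator norm of A ⊗ I_d induced by ‖·‖_{π⊗1_d}. -/
noncomputable def bopNorm {n : ℕ} (d : ℕ) (p : Fin n → ℝ)
    (A : Matrix (Fin n) (Fin n) ℝ) : ℝ :=
  ⨆ x : {x : Fin n → EuclideanSpace ℝ (Fin d) // x ≠ 0},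
    bnorm p (kron A x.1) / bnorm p x.1

/-- Euclidean norm on (ℝ^d)^n. -/
noncomputable def enormB {n d : ℕ} (x : Fin n → EuclideanSpace ℝ (Fin d)) : ℝ :=
  Real.sqrt (∑ j, ‖x j‖ ^ 2)

lemma wnorm_nonneg {n : ℕ} (p x : Fin n → ℝ) : 0 ≤ wnorm p x := Real.sqrt_nonneg _

lemma wnorm_pos {n : ℕ} {p x : Fin n → ℝ} (hp : ∀ i, 0 < p i) (hx : x ≠ 0) :
    0 < wnorm p x := by
  apply Real.sqrt_pos.mpr
  obtain ⟨i, hi⟩ := Function.ne_iff.mp hx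
  exact Finset.sum_pos' (fun j _ => div_nonneg (sq_nonneg _) (hp j).le)
    ⟨i, Finset.mem_univ i, div_pos (sq_pos_of_ne_zero hi) (hp i)⟩

lemma wnorm_mulVec_le {n : ℕ} (p : Fin n → ℝ) (hp : ∀ i, 0 < p i) (hp1 : ∀ i, p i ≤ 1)
    (A : Matrix (Fin n) (Fin n) ℝ) (x : Fin n → ℝ) :
    wnorm p (A.mulVec x) ≤ matNorm p A * wnorm p x := by
  set C := Real.sqrt (∑ i, (∑ j, A i j ^ 2) / p i) with hC
  have key : ∀ v : Fin n → ℝ, wnorm p (A.mulVec v) ≤ C * wnorm p v := by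
    intro v
    have hnn : 0 ≤ ∑ i, (∑ j, A i j ^ 2) / p i :=
      Finset.sum_nonneg fun i _ => div_nonneg (Finset.sum_nonneg fun j _ => sq_nonneg _) (hp i).le
    rw [wnorm, wnorm, hC, ← Real.sqrt_mul hnn]
    apply Real.sqrt_le_sqrt
    have hmv : ∀ i, A.mulVec v i = ∑ j, A i j * v j := by
      intro i; simp [Matrix.mulVec, dotProduct]
    calc ∑ i, A.mulVec v i ^ 2 / p i
        ≤ ∑ i, ((∑ j, A i j ^ 2) * (∑ j, v j ^ 2)) / p i := by
          apply Finset.sum_le_sum; intro i _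
          apply (div_le_div_iff_of_pos_right (hp i)).mpr
          rw [hmv i]
          exact Finset.sum_mul_sq_le_sq_mul_sq _ _ _
      _ = (∑ i, (∑ j, A i j ^ 2) / p i) * (∑ j, v j ^ 2) := by
          rw [Finset.sum_mul]
          exact Finset.sum_congr rfl fun i _ => by ring
      _ ≤ (∑ i, (∑ j, A i j ^ 2) / p i) * (∑ j, v j ^ 2 / p j) := by
          apply mul_le_mul_of_nonneg_left _ (Finset.sum_nonneg fun i _ => div_nonneg (Finset.sum_nonneg fun j _ => sq_nonneg _) (hp i).le)
          apply Finset.sum_le_sum; intro j _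
          rw [le_div_iff₀ (hp j)]
          nlinarith [sq_nonneg (v j), hp1 j, hp j]
  by_cases hx : x = 0
  · subst hx
    simp [wnorm, Matrix.mulVec_zero]
  · have hbdd : BddAbove (Set.range fun x : {x : Fin n → ℝ // x ≠ 0} =>
        wnorm p (A.mulVec x.1) / wnorm p x.1) := by
      refine ⟨C, ?_⟩
      rintro _ ⟨v, rfl⟩
      exact (div_le_iff₀ (wnorm_pos hp v.2)).mpr (key v.1)
    have := le_ciSup hbdd (⟨x, hx⟩ : {x : Fin n → ℝ // x ≠ 0})
    exact (div_le_iff₀ (wnorm_pos hp hx)).mp this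

lemma bnorm_le_mul {n d : ℕ} (p : Fin n → ℝ) (hp : ∀ i, 0 < p i) {c : ℝ} (hc : 0 ≤ c)
    (u v : Fin n → EuclideanSpace ℝ (Fin d)) (h : ∀ i, ‖u i‖ ≤ c * ‖v i‖) :
    bnorm p u ≤ c * bnorm p v := by
  rw [bnorm, bnorm, ← Real.sqrt_sq hc, ← Real.sqrt_mul (sq_nonneg c)]
  apply Real.sqrt_le_sqrt
  rw [Finset.mul_sum]
  apply Finset.sum_le_sum; intro i _
  rw [← mul_div_assoc]
  apply (div_le_div_iff_of_pos_right (hp i)).mpr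
  nlinarith [h i, norm_nonneg (u i), norm_nonneg (v i)]

lemma bnorm_eq_pilp {n d : ℕ} (p : Fin n → ℝ) (hp : ∀ i, 0 < p i)
    (x : Fin n → EuclideanSpace ℝ (Fin d)) :
    bnorm p x = ‖(WithLp.equiv 2 (Fin n → EuclideanSpace ℝ (Fin d))).symm
      (fun i => (Real.sqrt (p i))⁻¹ • x i)‖ := by
  rw [PiLp.norm_eq_of_L2, bnorm]
  congr 1
  apply Finset.sum_congr rfl; intro i _
  simp only [WithLp.equiv_symm_apply, PiLp.toLp_apply]
  rw [norm_smul, Real.norm_eq_abs, abs_of_nonneg (by positivity), mul_pow, inv_pow,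
    Real.sq_sqrt (hp i).le, inv_mul_eq_div, div_eq_div_iff (hp i).ne' (hp i).ne']

lemma bnorm_add_le {n d : ℕ} (p : Fin n → ℝ) (hp : ∀ i, 0 < p i)
    (u v : Fin n → EuclideanSpace ℝ (Fin d)) :
    bnorm p (fun i => u i + v i) ≤ bnorm p u + bnorm p v := by
  rw [bnorm_eq_pilp p hp, bnorm_eq_pilp p hp, bnorm_eq_pilp p hp]
  have : (WithLp.equiv 2 (Fin n → EuclideanSpace ℝ (Fin d))).symm
        (fun i => (Real.sqrt (p i))⁻¹ • (u i + v i))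
      = (WithLp.equiv 2 (Fin n → EuclideanSpace ℝ (Fin d))).symm
        (fun i => (Real.sqrt (p i))⁻¹ • u i)
      + (WithLp.equiv 2 (Fin n → EuclideanSpace ℝ (Fin d))).symm
        (fun i => (Real.sqrt (p i))⁻¹ • v i) := by
    rw [WithLp.equiv_symm_apply, ← WithLp.toLp_add]
    congr 1
    funext i
    simp [smul_add]
  rw [this]
  exact norm_add_le _ _

lemma bnorm_smul_const {n d : ℕ} (p : Fin n → ℝ) (hp : ∀ i, 0 < p i) (a : Fin n → ℝ)
    (v : EuclideanSpace ℝ (Fin d)) :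
    bnorm p (fun i => a i • v) = wnorm p a * ‖v‖ := by
  rw [bnorm, wnorm, ← Real.sqrt_sq (norm_nonneg v),
    ← Real.sqrt_mul (Finset.sum_nonneg fun j _ => div_nonneg (sq_nonneg _) (hp j).le)]
  congr 1
  rw [Finset.sum_mul]
  apply Finset.sum_congr rfl; intro i _
  rw [norm_smul, Real.norm_eq_abs, mul_pow, sq_abs]
  ring

/-- In the gradient-push algorithm, for every w_* and t ≥ 0,
‖z(t) − 1_n⊗w̄(t)‖_{π⊗1_d} ≤ δ‖w(t) − nπ⊗w̄(t)‖_{π⊗1_d}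
  + δ‖1_n − nπ‖_π σ_W^t (‖w̄(t) − w_*‖ + ‖w_*‖). -/
theorem z_consensus_estimate {n d : ℕ}
    (W : Matrix (Fin n) (Fin n) ℝ)
    (hWnn : ∀ i j, 0 ≤ W i j) (hWcol : ∀ j, ∑ i, W i j = 1)
    (p : Fin n → ℝ) (hppos : ∀ i, 0 < p i) (hpsum : ∑ i, p i = 1)
    (hWp : W.mulVec p = p)
    (σW : ℝ) (hσW : σW = matNorm p (W - Matrix.of fun i _ => p i))
    (f : Fin n → EuclideanSpace ℝ (Fin d) → ℝ)
    (gf : Fin n → EuclideanSpace ℝ (Fin d) → EuclideanSpace ℝ (Fin d))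
    (hgrad : ∀ i x, HasGradientAt (f i) (gf i x) x)
    (α : ℝ) (hα : 0 < α)
    (w z : ℕ → Fin n → EuclideanSpace ℝ (Fin d))
    (y : ℕ → Fin n → ℝ)
    (hy0 : y 0 = fun _ => 1) (hz0 : z 0 = w 0)
    (hyrec : ∀ t, y (t + 1) = W.mulVec (y t))
    (hwrec : ∀ t, w (t + 1) = kron W (fun i => w t i - α • gf i (z t i)))
    (hzrec : ∀ t i, z (t + 1) i = (y (t + 1) i)⁻¹ • w (t + 1) i)
    (hypos : ∀ t i, 0 < y t i)
    (δ : ℝ) (hδ : IsLUB (Set.range fun q : ℕ × Fin n => (y q.1 q.2)⁻¹) δ)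
    (wbar : ℕ → EuclideanSpace ℝ (Fin d))
    (hwbar : ∀ t, wbar t = (n : ℝ)⁻¹ • ∑ i, w t i)
    (wstar : EuclideanSpace ℝ (Fin d)) (t : ℕ) :
    bnorm p (fun i => z t i - wbar t)
      ≤ δ * bnorm p (fun i => w t i - ((n : ℝ) * p i) • wbar t)
        + δ * wnorm p (fun i => 1 - (n : ℝ) * p i) * σW ^ t
            * (‖wbar t - wstar‖ + ‖wstar‖) := by
  rcases Nat.eq_zero_or_pos n with hn | hn
  · exfalso
    subst hn
    haveI : IsEmpty (ℕ × Fin 0) := ⟨fun q => q.2.elim0⟩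
    have h1 : (Set.range fun q : ℕ × Fin 0 => (y q.1 q.2)⁻¹) = ∅ := Set.range_eq_empty _
    rw [h1] at hδ
    have h2 : δ ≤ δ - 1 := hδ.2 (fun x hx => hx.elim)
    linarith
  haveI : Nonempty (Fin n) := ⟨⟨0, hn⟩⟩
  set B : Matrix (Fin n) (Fin n) ℝ := W - Matrix.of fun i _ => p i with hB
  have hp1 : ∀ i, p i ≤ 1 := fun i =>
    hpsum ▸ Finset.single_le_sum (fun j _ => (hppos j).le) (Finset.mem_univ i)
  have hop : ∀ x, wnorm p (B.mulVec x) ≤ σW * wnorm p x := by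
    intro x; rw [hσW]; exact wnorm_mulVec_le p hppos hp1 B x
  have hσ0 : 0 ≤ σW := by
    have hx : (fun _ : Fin n => (1 : ℝ)) ≠ 0 := by
      intro h
      have := congrFun h (Classical.arbitrary (Fin n))
      simpa using this
    have h1 := hop (fun _ => 1)
    have h2 := wnorm_pos hppos hx
    nlinarith [wnorm_nonneg p (B.mulVec fun _ => (1 : ℝ))]
  have hysum : ∀ s, ∑ i, y s i = n := by
    intro s; induction s with
    | zero => simp [hy0]
    | succ s ih =>
      rw [hyrec]
      calc ∑ i, W.mulVec (y s) i = ∑ i, ∑ j, W i j * y s j := by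
            apply Finset.sum_congr rfl; intro i _
            simp [Matrix.mulVec, dotProduct]
        _ = ∑ j, (∑ i, W i j) * y s j := by
            rw [Finset.sum_comm]
            exact Finset.sum_congr rfl fun j _ => (Finset.sum_mul _ _ _).symm
        _ = ∑ j, y s j := by simp [hWcol]
        _ = n := ih
  have hrec : ∀ s, (fun i => y (s + 1) i - (n : ℝ) * p i)
      = B.mulVec (fun i => y s i - (n : ℝ) * p i) := by
    intro s; funext i
    have hWpi : ∑ j, W i j * p j = p i := by
      have := congrFun hWp i
      simpa [Matrix.mulVec, dotProduct] using this
    have hyi : y (s + 1) i = ∑ j, W i j * y s j := by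
      rw [hyrec]; simp [Matrix.mulVec, dotProduct]
    have expand : ∀ j : Fin n, (W i j - p i) * (y s j - (n : ℝ) * p j)
        = W i j * y s j - (n : ℝ) * (W i j * p j) - p i * y s j + ((n : ℝ) * p i) * p j :=
      fun j => by ring
    have hmv : B.mulVec (fun i => y s i - (n : ℝ) * p i) i
        = ∑ j, (W i j - p i) * (y s j - (n : ℝ) * p j) := by
      simp [hB, Matrix.mulVec, dotProduct, Matrix.sub_apply]
    rw [hmv, Finset.sum_congr rfl fun j _ => expand j]
    rw [Finset.sum_add_distrib, Finset.sum_sub_distrib, Finset.sum_sub_distrib,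
      ← Finset.mul_sum, ← Finset.mul_sum, ← Finset.mul_sum, hWpi, hysum s, hpsum, hyi]
    ring
  have hkey : ∀ s, wnorm p (fun i => y s i - (n : ℝ) * p i)
      ≤ σW ^ s * wnorm p (fun i => 1 - (n : ℝ) * p i) := by
    intro s; induction s with
    | zero => simp [hy0]
    | succ s ih =>
      rw [hrec s]
      calc wnorm p (B.mulVec fun i => y s i - (n : ℝ) * p i)
          ≤ σW * wnorm p (fun i => y s i - (n : ℝ) * p i) := hop _
        _ ≤ σW * (σW ^ s * wnorm p (fun i => 1 - (n : ℝ) * p i)) :=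
            mul_le_mul_of_nonneg_left ih hσ0
        _ = σW ^ (s + 1) * wnorm p (fun i => 1 - (n : ℝ) * p i) := by ring
  have hδub : ∀ s i, (y s i)⁻¹ ≤ δ := fun s i => hδ.1 (Set.mem_range_self (s, i))
  have hδ0 : 0 ≤ δ := by
    have h := hδub 0 ⟨0, hn⟩
    rw [hy0] at h
    simp at h
    linarith
  have hzi : ∀ s i, z s i = (y s i)⁻¹ • w s i := by
    intro s i
    cases s with
    | zero => rw [hz0, hy0]; simp
    | succ s => exact hzrec s i
  have hpw : ∀ i, ‖z t i - wbar t‖ ≤ δ * ‖w t i - (y t i) • wbar t‖ := by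
    intro i
    have hzz : z t i - wbar t = (y t i)⁻¹ • (w t i - y t i • wbar t) := by
      rw [hzi, smul_sub, smul_smul, inv_mul_cancel₀ (hypos t i).ne', one_smul]
    rw [hzz, norm_smul, Real.norm_eq_abs, abs_of_pos (inv_pos.mpr (hypos t i))]
    exact mul_le_mul_of_nonneg_right (hδub t i) (norm_nonneg _)
  have h1 : bnorm p (fun i => z t i - wbar t)
      ≤ δ * bnorm p (fun i => w t i - y t i • wbar t) :=
    bnorm_le_mul p hppos hδ0 _ _ hpw
  have hdec : (fun i => w t i - y t i • wbar t)
      = (fun i => (w t i - ((n : ℝ) * p i) • wbar t)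
          + (((n : ℝ) * p i - y t i) • wbar t)) := by
    funext i; rw [sub_smul]; abel
  have h2 : bnorm p (fun i => w t i - y t i • wbar t)
      ≤ bnorm p (fun i => w t i - ((n : ℝ) * p i) • wbar t)
        + bnorm p (fun i => ((n : ℝ) * p i - y t i) • wbar t) := by
    rw [hdec]; exact bnorm_add_le p hppos _ _
  have h3 : bnorm p (fun i => ((n : ℝ) * p i - y t i) • wbar t)
      = wnorm p (fun i => (n : ℝ) * p i - y t i) * ‖wbar t‖ :=
    bnorm_smul_const p hppos _ _
  have h4 : wnorm p (fun i => (n : ℝ) * p i - y t i)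
      = wnorm p (fun i => y t i - (n : ℝ) * p i) := by
    unfold wnorm
    congr 1
    apply Finset.sum_congr rfl; intro i _
    ring_nf
  have h5 : ‖wbar t‖ ≤ ‖wbar t - wstar‖ + ‖wstar‖ := by
    calc ‖wbar t‖ = ‖wbar t - wstar + wstar‖ := by rw [sub_add_cancel]
      _ ≤ ‖wbar t - wstar‖ + ‖wstar‖ := norm_add_le _ _
  have h6 : wnorm p (fun i => y t i - (n : ℝ) * p i) * ‖wbar t‖
      ≤ (σW ^ t * wnorm p (fun i => 1 - (n : ℝ) * p i)) * (‖wbar t - wstar‖ + ‖wstar‖) :=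
    mul_le_mul (hkey t) h5 (norm_nonneg _)
      (mul_nonneg (pow_nonneg hσ0 t) (wnorm_nonneg _ _))
  calc bnorm p (fun i => z t i - wbar t)
      ≤ δ * bnorm p (fun i => w t i - y t i • wbar t) := h1
    _ ≤ δ * (bnorm p (fun i => w t i - ((n : ℝ) * p i) • wbar t)
          + wnorm p (fun i => y t i - (n : ℝ) * p i) * ‖wbar t‖) := by
        apply mul_le_mul_of_nonneg_left _ hδ0
        rw [← h4, ← h3]; exact h2
    _ ≤ δ * (bnorm p (fun i => w t i - ((n : ℝ) * p i) • wbar t)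
          + (σW ^ t * wnorm p (fun i => 1 - (n : ℝ) * p i))
              * (‖wbar t - wstar‖ + ‖wstar‖)) := by
        apply mul_le_mul_of_nonneg_left _ hδ0
        exact add_le_add le_rfl h6
    _ = δ * bnorm p (fun i => w t i - ((n : ℝ) * p i) • wbar t)
          + δ * wnorm p (fun i => 1 - (n : ℝ) * p i) * σW ^ t
              * (‖wbar t - wstar‖ + ‖wstar‖) := by ring
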